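/- arXiv:2007.08654 — 2 statements merged into one kernel-verified Lean document; each statement's English description precedes it below -/
import Mathlib

section
/- Let n ≥ 1, 0 ≤ α < π/2, and let A ∈ Mₙ(ℂ) satisfy A ∈ S_α. Then cos(α)·‖A‖ ≤ w(A) ≤ ‖A‖. -/
/-
Write `T = H + iK` with `H = Re T`, `K = Im T` and `t = tan α`. The sector condition says exactly
that `tH + K` and `tH - K` are positive, and `2t T = (1 + ti)(tH + K) + (1 - ti)(tH - K)`.
Cauchy–Schwarz for these two positive operators, with `|1 ± ti| = sec α` and
`(tH + K) + (tH - K) = 2tH`, gives the sectorial Cauchy–Schwarz inequality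
`|⟨y, Tx⟩|² ≤ sec² α ⟨x, Hx⟩⟨y, Hy⟩`. For `y = Tx`, with `⟨x, Hx⟩ ≤ w(T)‖x‖²`, this reads
`‖Tx‖ ≤ sec α · w(T)‖x‖`. The case `α = 0` follows by letting `t ↓ 0`.
-/

open Matrix MeasureTheory
open scoped ComplexOrder

attribute [local instance] Matrix.normedAddCommGroup Matrix.normedSpace

/-- The numerical radius of a complex `n × n` matrix. -/
noncomputable def nradius {n : ℕ} (A : Matrix (Fin n) (Fin n) ℂ) : ℝ :=
  sSup {r : ℝ | ∃ x : EuclideanSpace ℂ (Fin n), ‖x‖ = 1 ∧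
    r = ‖(inner ℂ x (Matrix.toEuclideanCLM (𝕜 := ℂ) A x) : ℂ)‖}

/-- The operator (spectral) norm of a complex `n × n` matrix. -/
noncomputable def opNorm {n : ℕ} (A : Matrix (Fin n) (Fin n) ℂ) : ℝ :=
  ‖(Matrix.toEuclideanCLM (𝕜 := ℂ) A :
      EuclideanSpace ℂ (Fin n) →L[ℂ] EuclideanSpace ℂ (Fin n))‖

/-- The real part `(A + Aᴴ)/2` of a matrix. -/
noncomputable def matRe {n : ℕ} (A : Matrix (Fin n) (Fin n) ℂ) : Matrix (Fin n) (Fin n) ℂ :=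
  (1 / 2 : ℂ) • (A + Aᴴ)

/-- `A ∈ S_α` : `Re A` is positive definite and the numerical range of `A` lies in the
sector `{z : |Im z| ≤ tan α · Re z}`. -/
def InSector {n : ℕ} (α : ℝ) (A : Matrix (Fin n) (Fin n) ℂ) : Prop :=
  (matRe A).PosDef ∧ ∀ x : EuclideanSpace ℂ (Fin n), ‖x‖ = 1 →
    |(inner ℂ x (Matrix.toEuclideanCLM (𝕜 := ℂ) A x) : ℂ).im| ≤
      Real.tan α * ((inner ℂ x (Matrix.toEuclideanCLM (𝕜 := ℂ) A x) : ℂ)).re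

open ComplexConjugate Filter Topology
open scoped InnerProductSpace InnerProduct

lemma add_sq_le_add_mul_add {p q a b c d : ℝ} (ha : 0 ≤ a) (hb : 0 ≤ b) (hc : 0 ≤ c)
    (hd : 0 ≤ d) (hp : p ^ 2 ≤ a * c) (hq : q ^ 2 ≤ b * d) :
    (p + q) ^ 2 ≤ (a + b) * (c + d) := by
  have hpq : p * q ≤ (a * d + b * c) / 2 := by
    nlinarith [sq_nonneg (a * d - b * c), mul_le_mul hp hq (sq_nonneg q) (mul_nonneg ha hc),
      mul_nonneg ha hd, mul_nonneg hb hc]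
  nlinarith

variable {E : Type*} [NormedAddCommGroup E] [InnerProductSpace ℂ E]

lemma inner_map_self_eq_norm_sq_mul (T : E →L[ℂ] E) (x : E) :
    ⟪x, T x⟫_ℂ = ((‖x‖ ^ 2 : ℝ) : ℂ) * ⟪(‖x‖⁻¹ : ℂ) • x, T ((‖x‖⁻¹ : ℂ) • x)⟫_ℂ := by
  rcases eq_or_ne x 0 with rfl | hx
  · simp
  have : (‖x‖ : ℂ) ≠ 0 := by exact_mod_cast norm_ne_zero_iff.mpr hx
  rw [map_smul, inner_smul_left, inner_smul_right, map_inv₀, Complex.conj_ofReal]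
  push_cast
  field_simp

lemma norm_inner_map_self_le_of_norm_eq_one {w : ℝ} {T : E →L[ℂ] E}
    (h : ∀ x, ‖x‖ = 1 → ‖⟪x, T x⟫_ℂ‖ ≤ w) (x : E) : ‖⟪x, T x⟫_ℂ‖ ≤ w * ‖x‖ ^ 2 := by
  rcases eq_or_ne x 0 with rfl | hx
  · simp
  rw [inner_map_self_eq_norm_sq_mul, norm_mul, Complex.norm_of_nonneg (by positivity), mul_comm]
  exact mul_le_mul_of_nonneg_right (h _ (norm_smul_inv_norm hx)) (by positivity)

lemma norm_inner_map_self_le_opNorm (T : E →L[ℂ] E) {x : E} (hx : ‖x‖ = 1) :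
    ‖⟪x, T x⟫_ℂ‖ ≤ ‖T‖ :=
  calc ‖⟪x, T x⟫_ℂ‖ ≤ ‖x‖ * ‖T x‖ := norm_inner_le_norm _ _
    _ ≤ ‖T‖ := by simpa [hx] using T.le_opNorm x

-- `0 ≤ Re` is part of the definition since for `t = 0` the sector condition does not imply it.
def IsSectorial (t : ℝ) (T : E →L[ℂ] E) : Prop :=
  ∀ x, 0 ≤ (⟪x, T x⟫_ℂ).re ∧ |(⟪x, T x⟫_ℂ).im| ≤ t * (⟪x, T x⟫_ℂ).re

lemma IsSectorial.mono {t t' : ℝ} {T : E →L[ℂ] E} (hT : IsSectorial t T) (htt' : t ≤ t') :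
    IsSectorial t' T := fun x =>
  ⟨(hT x).1, (hT x).2.trans (mul_le_mul_of_nonneg_right htt' (hT x).1)⟩

lemma IsSectorial.of_norm_eq_one {t : ℝ} {T : E →L[ℂ] E} (hre : ∀ x, 0 ≤ (⟪x, T x⟫_ℂ).re)
    (h : ∀ x, ‖x‖ = 1 → |(⟪x, T x⟫_ℂ).im| ≤ t * (⟪x, T x⟫_ℂ).re) : IsSectorial t T := by
  refine fun x => ⟨hre x, ?_⟩
  rcases eq_or_ne x 0 with rfl | hx
  · simp
  rw [inner_map_self_eq_norm_sq_mul, Complex.re_ofReal_mul, Complex.im_ofReal_mul, abs_mul,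
    abs_of_nonneg (by positivity), mul_left_comm]
  exact mul_le_mul_of_nonneg_left (h _ (norm_smul_inv_norm hx)) (by positivity)

variable [CompleteSpace E]

namespace ContinuousLinearMap

lemma IsPositive.norm_inner_sq_le {P : E →L[ℂ] E} (hP : P.IsPositive) (x y : E) :
    ‖⟪y, P x⟫_ℂ‖ ^ 2 ≤ (⟪y, P y⟫_ℂ).re * (⟪x, P x⟫_ℂ).re := by
  obtain ⟨S, rfl⟩ :=
    CStarAlgebra.nonneg_iff_eq_star_mul_self.mp ((nonneg_iff_isPositive P).mpr hP)
  simp only [star_eq_adjoint, mul_def, comp_apply, adjoint_inner_right]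
  calc ‖⟪S y, S x⟫_ℂ‖ ^ 2 ≤ (‖S y‖ * ‖S x‖) ^ 2 :=
        pow_le_pow_left₀ (norm_nonneg _) (norm_inner_le_norm _ _) 2
    _ = _ := by rw [mul_pow, inner_self_eq_norm_sq_to_K, inner_self_eq_norm_sq_to_K]; norm_cast

lemma inner_smul_add_conj_smul_adjoint_apply_self (T : E →L[ℂ] E) (ω : ℂ) (x : E) :
    ⟪x, (ω • T + conj ω • T†) x⟫_ℂ = ((2 * (ω * ⟪x, T x⟫_ℂ).re : ℝ) : ℂ) := by
  rw [_root_.add_apply, _root_.smul_apply, _root_.smul_apply, inner_add_right, inner_smul_right,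
    inner_smul_right, adjoint_inner_right, ← inner_conj_symm (T x) x, ← map_mul, Complex.add_conj]

lemma isPositive_smul_add_conj_smul_adjoint (T : E →L[ℂ] E) (ω : ℂ)
    (h : ∀ x, 0 ≤ (ω * ⟪x, T x⟫_ℂ).re) : (ω • T + conj ω • T†).IsPositive := by
  rw [isPositive_iff_complex]
  intro x
  rw [← inner_conj_symm, inner_smul_add_conj_smul_adjoint_apply_self, Complex.conj_ofReal]
  simpa using h x

end ContinuousLinearMap

open ContinuousLinearMap in
lemma IsSectorial.norm_inner_sq_le_of_pos {t : ℝ} (ht : 0 < t) {T : E →L[ℂ] E}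
    (hT : IsSectorial t T) (x y : E) :
    ‖⟪y, T x⟫_ℂ‖ ^ 2 ≤ (1 + t ^ 2) * ((⟪x, T x⟫_ℂ).re * (⟪y, T y⟫_ℂ).re) := by
  set ω : ℂ := t - Complex.I
  have hω : conj ω = t + Complex.I := by simp [ω]
  have hre (v : E) : (ω * ⟪v, T v⟫_ℂ).re = t * (⟪v, T v⟫_ℂ).re + (⟪v, T v⟫_ℂ).im := by
    simp [ω, Complex.mul_re]
  have hre' (v : E) : (conj ω * ⟪v, T v⟫_ℂ).re = t * (⟪v, T v⟫_ℂ).re - (⟪v, T v⟫_ℂ).im := by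
    simp [hω, Complex.mul_re]
  set P := ω • T + conj ω • T†
  set Q := conj ω • T + conj (conj ω) • T†
  have hP : P.IsPositive := isPositive_smul_add_conj_smul_adjoint T ω fun v => by
    rw [hre]; linarith [neg_abs_le (⟪v, T v⟫_ℂ).im, (hT v).2]
  have hQ : Q.IsPositive := isPositive_smul_add_conj_smul_adjoint T (conj ω) fun v => by
    rw [hre']; linarith [le_abs_self (⟪v, T v⟫_ℂ).im, (hT v).2]
  have hPQ (v : E) : (⟪v, P v⟫_ℂ).re + (⟪v, Q v⟫_ℂ).re = 4 * t * (⟪v, T v⟫_ℂ).re := by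
    simp only [P, Q, inner_smul_add_conj_smul_adjoint_apply_self, Complex.ofReal_re, hre, hre']
    ring
  -- `4t T = (1 + ti) P + (1 - ti) Q`: the `T†` parts cancel.
  have hdecomp : 4 * t * ⟪y, T x⟫_ℂ
      = (1 + t * Complex.I) * ⟪y, P x⟫_ℂ + (1 - t * Complex.I) * ⟪y, Q x⟫_ℂ := by
    simp only [P, Q, _root_.add_apply, _root_.smul_apply,
      inner_add_right, inner_smul_right, Complex.conj_conj]
    rw [hω]
    simp only [ω]
    linear_combination (2 * t * ⟪y, T x⟫_ℂ - 2 * t * ⟪y, (adjoint T) x⟫_ℂ) * Complex.I_sq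
  have hK : ‖1 + t * Complex.I‖ = √(1 + t ^ 2) := by
    rw [← Complex.ofReal_one, Complex.norm_add_mul_I, one_pow]
  have hK' : ‖1 - t * Complex.I‖ = √(1 + t ^ 2) := by
    rw [← hK, ← Complex.norm_conj]; simp
  have hle : 4 * t * ‖⟪y, T x⟫_ℂ‖ ≤ √(1 + t ^ 2) * (‖⟪y, P x⟫_ℂ‖ + ‖⟪y, Q x⟫_ℂ‖) := by
    calc 4 * t * ‖⟪y, T x⟫_ℂ‖ = ‖4 * t * ⟪y, T x⟫_ℂ‖ := by
          rw [norm_mul, norm_mul]; simp [abs_of_pos ht]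
      _ ≤ _ := by
          rw [hdecomp, mul_add]
          refine (norm_add_le _ _).trans ?_
          rw [norm_mul, norm_mul, hK, hK']
  have hsum : (‖⟪y, P x⟫_ℂ‖ + ‖⟪y, Q x⟫_ℂ‖) ^ 2
      ≤ (4 * t * (⟪y, T y⟫_ℂ).re) * (4 * t * (⟪x, T x⟫_ℂ).re) := by
    rw [← hPQ, ← hPQ]
    exact add_sq_le_add_mul_add (hP.re_inner_nonneg_right y) (hQ.re_inner_nonneg_right y)
      (hP.re_inner_nonneg_right x) (hQ.re_inner_nonneg_right x)
      (hP.norm_inner_sq_le x y) (hQ.norm_inner_sq_le x y)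
  have hsq : (4 * t * ‖⟪y, T x⟫_ℂ‖) ^ 2 ≤ (1 + t ^ 2) * (‖⟪y, P x⟫_ℂ‖ + ‖⟪y, Q x⟫_ℂ‖) ^ 2 := by
    calc _ ≤ (√(1 + t ^ 2) * (‖⟪y, P x⟫_ℂ‖ + ‖⟪y, Q x⟫_ℂ‖)) ^ 2 :=
          pow_le_pow_left₀ (by positivity) hle 2
      _ = _ := by rw [mul_pow, Real.sq_sqrt (by positivity)]
  have ht2 : 0 < (4 * t) ^ 2 := by positivity
  refine le_of_mul_le_mul_left ?_ ht2
  calc (4 * t) ^ 2 * ‖⟪y, T x⟫_ℂ‖ ^ 2 = (4 * t * ‖⟪y, T x⟫_ℂ‖) ^ 2 := by ring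
    _ ≤ (1 + t ^ 2) * ((4 * t * (⟪y, T y⟫_ℂ).re) * (4 * t * (⟪x, T x⟫_ℂ).re)) :=
        hsq.trans (mul_le_mul_of_nonneg_left hsum (by positivity))
    _ = _ := by ring

lemma IsSectorial.norm_inner_sq_le {t : ℝ} (ht : 0 ≤ t) {T : E →L[ℂ] E} (hT : IsSectorial t T)
    (x y : E) :
    ‖⟪y, T x⟫_ℂ‖ ^ 2 ≤ (1 + t ^ 2) * ((⟪x, T x⟫_ℂ).re * (⟪y, T y⟫_ℂ).re) := by
  have hlim : Tendsto (fun s : ℝ => (1 + s ^ 2) * ((⟪x, T x⟫_ℂ).re * (⟪y, T y⟫_ℂ).re)) (𝓝[>] t)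
      (𝓝 ((1 + t ^ 2) * ((⟪x, T x⟫_ℂ).re * (⟪y, T y⟫_ℂ).re))) :=
    ((Continuous.tendsto (by fun_prop) t).mono_left nhdsWithin_le_nhds)
  refine ge_of_tendsto hlim (eventually_nhdsWithin_of_forall fun s hs => ?_)
  exact (hT.mono (le_of_lt hs)).norm_inner_sq_le_of_pos (ht.trans_lt hs) x y

lemma IsSectorial.opNorm_le {t w : ℝ} (ht : 0 ≤ t) (hw : 0 ≤ w) {T : E →L[ℂ] E}
    (hT : IsSectorial t T) (hTw : ∀ x, (⟪x, T x⟫_ℂ).re ≤ w * ‖x‖ ^ 2) :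
    ‖T‖ ≤ √(1 + t ^ 2) * w := by
  refine ContinuousLinearMap.opNorm_le_bound _ (by positivity) fun x => ?_
  have hTx : ‖⟪T x, T x⟫_ℂ‖ = ‖T x‖ ^ 2 := by
    rw [inner_self_eq_norm_sq_to_K, norm_pow, RCLike.norm_ofReal, abs_norm]
  have key := hT.norm_inner_sq_le ht x (T x)
  rw [hTx] at key
  have hsq : ‖T x‖ ^ 2 ≤ (√(1 + t ^ 2) * w * ‖x‖) ^ 2 := by
    rw [mul_pow, mul_pow, Real.sq_sqrt (by positivity)]
    rcases (norm_nonneg (T x)).eq_or_lt with h0 | hpos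
    · rw [← h0, zero_pow two_ne_zero]; positivity
    · have := key.trans (mul_le_mul_of_nonneg_left (mul_le_mul (hTw x) (hTw (T x))
        (hT (T x)).1 (by positivity)) (by positivity))
      nlinarith [pow_pos hpos 2]
  exact (pow_le_pow_iff_left₀ (norm_nonneg _) (by positivity) two_ne_zero).mp hsq

section Matrix

variable {n : ℕ}

lemma re_inner_toEuclideanCLM_self_nonneg {A : Matrix (Fin n) (Fin n) ℂ}
    (hA : (matRe A).PosSemidef) (x : EuclideanSpace ℂ (Fin n)) :
    0 ≤ (⟪x, toEuclideanCLM (𝕜 := ℂ) A x⟫_ℂ).re := by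
  have hpos : (toEuclideanCLM (𝕜 := ℂ) (matRe A)).IsPositive := by
    rw [← ContinuousLinearMap.isPositive_toLinearMap_iff, coe_toEuclideanCLM_eq_toEuclideanLin]
    exact Matrix.isPositive_toEuclideanLin_iff.mpr hA
  have hRe : toEuclideanCLM (𝕜 := ℂ) (matRe A)
      = (1 / 2 : ℂ) • toEuclideanCLM (𝕜 := ℂ) A
        + conj (1 / 2 : ℂ) • (toEuclideanCLM (𝕜 := ℂ) A)† := by
    rw [matRe, map_smul, map_add, ← star_eq_conjTranspose, map_star,
      ContinuousLinearMap.star_eq_adjoint, smul_add, map_div₀, map_one, map_ofNat]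
  have h := hpos.re_inner_nonneg_right x
  rw [hRe, ContinuousLinearMap.inner_smul_add_conj_smul_adjoint_apply_self] at h
  simpa using h

lemma nradius_nonneg (A : Matrix (Fin n) (Fin n) ℂ) : 0 ≤ nradius A :=
  Real.sSup_nonneg (by rintro _ ⟨x, -, rfl⟩; exact norm_nonneg _)

lemma nradius_le_opNorm (A : Matrix (Fin n) (Fin n) ℂ) : nradius A ≤ opNorm A :=
  Real.sSup_le (by rintro _ ⟨x, hx, rfl⟩; exact norm_inner_map_self_le_opNorm _ hx) (norm_nonneg _)

lemma norm_inner_le_nradius (A : Matrix (Fin n) (Fin n) ℂ) {x : EuclideanSpace ℂ (Fin n)}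
    (hx : ‖x‖ = 1) : ‖⟪x, toEuclideanCLM (𝕜 := ℂ) A x⟫_ℂ‖ ≤ nradius A :=
  le_csSup ⟨opNorm A, by rintro _ ⟨y, hy, rfl⟩; exact norm_inner_map_self_le_opNorm _ hy⟩
    ⟨x, hx, rfl⟩

end Matrix

theorem stmt0_general {n : ℕ} {α : ℝ} (hα0 : 0 ≤ α) (hα : α < Real.pi / 2)
    {A : Matrix (Fin n) (Fin n) ℂ} (hA : InSector α A) :
    Real.cos α * opNorm A ≤ nradius A ∧ nradius A ≤ opNorm A := by
  obtain ⟨hRe, hsec⟩ := hA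
  have hcos : 0 < Real.cos α := Real.cos_pos_of_mem_Ioo ⟨by linarith [Real.pi_pos], hα⟩
  have hsect : IsSectorial (Real.tan α) (toEuclideanCLM (𝕜 := ℂ) A) :=
    .of_norm_eq_one (re_inner_toEuclideanCLM_self_nonneg hRe.posSemidef) hsec
  have hnorm : opNorm A ≤ √(1 + Real.tan α ^ 2) * nradius A :=
    hsect.opNorm_le (Real.tan_nonneg_of_nonneg_of_le_pi_div_two hα0 hα.le) (nradius_nonneg A)
      fun x => (Complex.re_le_norm _).trans
        (norm_inner_map_self_le_of_norm_eq_one (fun _ => norm_inner_le_nradius A) x)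
  refine ⟨?_, nradius_le_opNorm A⟩
  calc Real.cos α * opNorm A ≤ Real.cos α * (√(1 + Real.tan α ^ 2) * nradius A) :=
        mul_le_mul_of_nonneg_left hnorm hcos.le
    _ = nradius A := by
        rw [← mul_assoc, ← Real.inv_sqrt_one_add_tan_sq hcos, inv_mul_cancel₀ (by positivity),
          one_mul]

theorem stmt0 {n : ℕ} (hn : 1 ≤ n) {α : ℝ} (hα0 : 0 ≤ α) (hα : α < Real.pi / 2)
    {A : Matrix (Fin n) (Fin n) ℂ} (hA : InSector α A) :
    Real.cos α * opNorm A ≤ nradius A ∧ nradius A ≤ opNorm A :=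
  stmt0_general hα0 hα hA
end

section
/- Let n ≥ 1, 0 ≤ α < π/2, let A, B ∈ Mₙ(ℂ) satisfy A, B ∈ S_α, and let ν be a probability measure on [0,1]. Then the matrix A σ B := ∫₀¹ ((1−s)A⁻¹ + sB⁻¹)⁻¹ dν(s) belongs to S_α. -/
open Matrix MeasureTheory
open scoped ComplexOrder

attribute [local instance] Matrix.normedAddCommGroup Matrix.normedSpace

/-- The operator mean `A σ B = ∫₀¹ ((1-s)A⁻¹ + sB⁻¹)⁻¹ dν(s)` associated with a
probability measure `ν` on `[0,1]`. -/
noncomputable def matMean {n : ℕ} (ν : Measure ℝ) (A B : Matrix (Fin n) (Fin n) ℂ) :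
    Matrix (Fin n) (Fin n) ℂ :=
  ∫ s in Set.Icc (0 : ℝ) 1, ((1 - s) • A⁻¹ + s • B⁻¹)⁻¹ ∂ν

/-!
Call `A` sectorial if its quadratic form `v ↦ ⟨A v, v⟩` maps every nonzero vector into the
sector `{z | 0 < Re z ∧ |Im z| ≤ tan α · Re z}`; by positive definiteness of `Re A` and
homogeneity of the form, this is exactly `A ∈ S_α`. The sector is a convex cone stable under
conjugation. Since `⟨A⁻¹ v, v⟩ = conj ⟨A w, w⟩` for `w = A⁻¹ v`, sectorial matrices are
closed under inversion; by convexity they are closed under convex combinations; and an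
integral against a nonzero measure of sectorial matrices is sectorial, because
`Re ∫ f = ∫ Re f > 0` and `|Im ∫ f| ≤ ∫ |Im f| ≤ tan α ∫ Re f`. So each integrand
`((1-s) A⁻¹ + s B⁻¹)⁻¹`, `s ∈ [0,1]`, is sectorial and continuous in `s`, and `ν` gives
`[0,1]` full mass.
-/

open ComplexConjugate

section Sector

variable {α : ℝ}

def sector (α : ℝ) : Set ℂ := {z | 0 < z.re ∧ |z.im| ≤ Real.tan α * z.re}

lemma conj_mem_sector {z : ℂ} (hz : z ∈ sector α) : conj z ∈ sector α := by
  simpa [sector] using hz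

lemma ofReal_mul_mem_sector_iff {c : ℝ} (hc : 0 < c) {z : ℂ} :
    (c : ℂ) * z ∈ sector α ↔ z ∈ sector α := by
  simp only [sector, Set.mem_ofPred_eq, Complex.re_ofReal_mul, Complex.im_ofReal_mul, abs_mul,
    abs_of_pos hc, mul_left_comm (Real.tan α), mul_pos_iff_of_pos_left hc,
    mul_le_mul_iff_right₀ hc]

lemma convex_sector : Convex ℝ (sector α) := by
  rintro z ⟨hz, hz'⟩ w ⟨hw, hw'⟩ a b ha hb hab
  simp only [sector, Set.mem_ofPred_eq, Complex.add_re, Complex.add_im, Complex.smul_re,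
    Complex.smul_im, smul_eq_mul]
  refine ⟨?_, ?_⟩
  · rcases ha.eq_or_lt with rfl | ha
    · rw [zero_add] at hab; subst hab; linarith
    · positivity
  · calc |a * z.im + b * w.im| ≤ a * |z.im| + b * |w.im| := by
          simpa [abs_mul, abs_of_nonneg ha, abs_of_nonneg hb] using
            abs_add_le (a * z.im) (b * w.im)
      _ ≤ a * (Real.tan α * z.re) + b * (Real.tan α * w.re) := by gcongr
      _ = Real.tan α * (a * z.re + b * w.re) := by ring

lemma integral_mem_sector {X : Type*} [MeasurableSpace X] {μ : Measure X} [NeZero μ]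
    {f : X → ℂ} (hf : Integrable f μ) (hmem : ∀ᵐ x ∂μ, f x ∈ sector α) :
    ∫ x, f x ∂μ ∈ sector α := by
  have hre : ∫ x, (f x).re ∂μ = (∫ x, f x ∂μ).re := integral_re hf
  have him : ∫ x, (f x).im ∂μ = (∫ x, f x ∂μ).im := integral_im hf
  refine ⟨?_, ?_⟩
  · have hsupp : ∀ᵐ x ∂μ, x ∈ Function.support fun x => (f x).re :=
      hmem.mono fun x hx => hx.1.ne'
    rw [← hre, integral_pos_iff_support_of_nonneg_ae (hmem.mono fun x hx => hx.1.le) hf.re,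
      measure_of_measure_compl_eq_zero (ae_iff.1 hsupp)]
    exact Measure.measure_univ_pos.2 (NeZero.ne μ)
  · rw [← hre, ← him]
    calc |∫ x, (f x).im ∂μ| ≤ ∫ x, |(f x).im| ∂μ := abs_integral_le_integral_abs
      _ ≤ ∫ x, Real.tan α * (f x).re ∂μ :=
        integral_mono_ae hf.im.abs (hf.re.const_mul _) (hmem.mono fun x hx => hx.2)
      _ = Real.tan α * ∫ x, (f x).re ∂μ := integral_const_mul _ _

end Sector

theorem ContinuousOn.matrix_inv {X 𝕜 ι : Type*} [TopologicalSpace X] [Field 𝕜]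
    [TopologicalSpace 𝕜] [IsTopologicalRing 𝕜] [ContinuousInv₀ 𝕜] [Fintype ι] [DecidableEq ι]
    {F : X → Matrix ι ι 𝕜} {s : Set X} (hF : ContinuousOn F s)
    (hdet : ∀ x ∈ s, (F x).det ≠ 0) : ContinuousOn (fun x => (F x)⁻¹) s := by
  intro x hx
  have hinv : ContinuousAt Ring.inverse (F x).det := by
    rw [Ring.inverse_eq_inv']
    exact continuousAt_inv₀ (hdet x hx)
  exact (continuousAt_matrix_inv _ hinv).comp_continuousWithinAt (hF x hx)

section Sectorial

variable {ι : Type*} [Fintype ι] {n : ℕ} {α : ℝ}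

-- The matrix norm is only a local instance, so the `ContinuousENorm` behind `Integrable`
-- has to be supplied by hand.
noncomputable local instance : ContinuousENorm (Matrix ι ι ℂ) :=
  SeminormedAddGroup.toContinuousENorm

def qform (A : Matrix ι ι ℂ) (v : ι → ℂ) : ℂ := star v ⬝ᵥ A *ᵥ v

lemma qform_add (A B : Matrix ι ι ℂ) (v : ι → ℂ) :
    qform (A + B) v = qform A v + qform B v := by
  simp only [qform, add_mulVec, dotProduct_add]

lemma qform_smul {R : Type*} [DistribSMul R ℂ] [IsScalarTower R ℂ ℂ] [SMulCommClass R ℂ ℂ]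
    (c : R) (A : Matrix ι ι ℂ) (v : ι → ℂ) :
    qform (c • A) v = c • qform A v := by
  simp only [qform, smul_mulVec, dotProduct_smul]

lemma qform_ofReal_smul_vec (A : Matrix ι ι ℂ) (r : ℝ) (v : ι → ℂ) :
    qform A ((r : ℂ) • v) = ((r ^ 2 : ℝ) : ℂ) * qform A v := by
  simp only [qform, mulVec_smul, star_smul, smul_dotProduct, dotProduct_smul, smul_eq_mul,
    Complex.star_def, Complex.conj_ofReal]
  push_cast
  ring

def qformLin (v : ι → ℂ) : Matrix ι ι ℂ →ₗ[ℂ] ℂ where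
  toFun A := qform A v
  map_add' A B := qform_add A B v
  map_smul' c A := qform_smul c A v

lemma qform_conjTranspose (A : Matrix ι ι ℂ) (v : ι → ℂ) :
    qform Aᴴ v = conj (qform A v) := by
  rw [qform, qform, mulVec_conjTranspose, star_dotProduct_star, ← dotProduct_mulVec]
  rfl

lemma qform_integral {X : Type*} [MeasurableSpace X] {μ : Measure X} {F : X → Matrix ι ι ℂ}
    (hF : Integrable F μ) (v : ι → ℂ) : qform (∫ x, F x ∂μ) v = ∫ x, qform (F x) v ∂μ :=
  ((qformLin v).toContinuousLinearMap.integral_comp_comm hF).symm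

def Sectorial (α : ℝ) (A : Matrix ι ι ℂ) : Prop := ∀ v ≠ 0, qform A v ∈ sector α

lemma Sectorial.det_ne_zero [DecidableEq ι] {A : Matrix ι ι ℂ} (hA : Sectorial α A) :
    A.det ≠ 0 := by
  intro h
  obtain ⟨v, hv, hAv⟩ := exists_mulVec_eq_zero_iff.2 h
  simpa [qform, hAv] using (hA v hv).1

lemma Sectorial.inv [DecidableEq ι] {A : Matrix ι ι ℂ} (hA : Sectorial α A) :
    Sectorial α A⁻¹ := by
  intro v hv
  have hAA : A * A⁻¹ = 1 := mul_nonsing_inv A (isUnit_iff_ne_zero.2 hA.det_ne_zero)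
  set w := A⁻¹ *ᵥ v
  have hAw : A *ᵥ w = v := by rw [mulVec_mulVec, hAA, one_mulVec]
  have hw : w ≠ 0 := by
    rintro hw; rw [hw, mulVec_zero] at hAw; exact hv hAw.symm
  have hconj : qform A⁻¹ v = conj (qform A w) :=
    calc qform A⁻¹ v = star (A *ᵥ w) ⬝ᵥ w := by rw [hAw]; rfl
      _ = conj (qform A w) := star_dotProduct _ _
  rw [hconj]
  exact conj_mem_sector (hA w hw)

lemma convex_setOf_sectorial : Convex ℝ {A : Matrix ι ι ℂ | Sectorial α A} := by
  intro A hA B hB a b ha hb hab v hv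
  rw [qform_add, qform_smul, qform_smul]
  exact convex_sector (hA v hv) (hB v hv) ha hb hab

lemma Sectorial.integral {X : Type*} [MeasurableSpace X] {μ : Measure X} [NeZero μ]
    {F : X → Matrix ι ι ℂ} (hF : Integrable F μ) (h : ∀ᵐ x ∂μ, Sectorial α (F x)) :
    Sectorial α (∫ x, F x ∂μ) := by
  intro v hv
  rw [qform_integral hF]
  exact integral_mem_sector ((qformLin v).toContinuousLinearMap.integrable_comp hF)
    (h.mono fun x hx => hx v hv)

lemma inner_toEuclideanCLM (A : Matrix (Fin n) (Fin n) ℂ) (x : EuclideanSpace ℂ (Fin n)) :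
    inner ℂ x (toEuclideanCLM (𝕜 := ℂ) A x) = qform A x.ofLp := by
  rw [EuclideanSpace.inner_eq_star_dotProduct, ofLp_toEuclideanCLM, dotProduct_comm]
  rfl

lemma qform_matRe (A : Matrix (Fin n) (Fin n) ℂ) (v : Fin n → ℂ) :
    qform (matRe A) v = (qform A v).re := by
  rw [matRe, qform_smul, qform_add, qform_conjTranspose, Complex.add_conj, smul_eq_mul]
  push_cast
  ring

lemma matRe_posDef_iff (A : Matrix (Fin n) (Fin n) ℂ) :
    (matRe A).PosDef ↔ ∀ v ≠ 0, 0 < (qform A v).re := by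
  have hherm : (matRe A).IsHermitian := by
    simp [matRe, IsHermitian, conjTranspose_smul, add_comm]
  simp only [posDef_iff_dotProduct_mulVec, hherm, true_and]
  refine forall₂_congr fun v _ => ?_
  rw [← qform, qform_matRe, Complex.zero_lt_real]

lemma inSector_iff_sectorial (A : Matrix (Fin n) (Fin n) ℂ) :
    InSector α A ↔ Sectorial α A := by
  simp only [InSector, inner_toEuclideanCLM, matRe_posDef_iff]
  constructor
  · rintro ⟨hpos, hbound⟩ v hv
    set x : EuclideanSpace ℂ (Fin n) := WithLp.toLp 2 v
    have hx : x ≠ 0 := by simpa [x] using hv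
    have hmem : qform A ((‖x‖⁻¹ : ℂ) • x).ofLp ∈ sector α :=
      ⟨hpos _ (by simpa using hx), hbound _ (norm_smul_inv_norm hx)⟩
    rwa [WithLp.ofLp_smul, ← Complex.ofReal_inv, qform_ofReal_smul_vec,
      ofReal_mul_mem_sector_iff (by positivity)] at hmem
  · intro h
    refine ⟨fun v hv => (h v hv).1, fun x hx => (h x.ofLp ?_).2⟩
    simpa using ne_zero_of_norm_ne_zero (hx.trans_ne one_ne_zero)

lemma Sectorial.matMean {A B : Matrix (Fin n) (Fin n) ℂ} (hA : Sectorial α A)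
    (hB : Sectorial α B) {ν : Measure ℝ} [IsProbabilityMeasure ν]
    (hν : ν (Set.Icc 0 1)ᶜ = 0) : Sectorial α (matMean ν A B) := by
  set M : ℝ → Matrix (Fin n) (Fin n) ℂ := fun s => (1 - s) • A⁻¹ + s • B⁻¹
  have hM : ∀ s ∈ Set.Icc (0 : ℝ) 1, Sectorial α (M s) := fun s hs =>
    convex_setOf_sectorial hA.inv hB.inv (sub_nonneg.2 hs.2) hs.1 (sub_add_cancel 1 s)
  have hcont : ContinuousOn (fun s => (M s)⁻¹) (Set.Icc 0 1) :=
    ContinuousOn.matrix_inv (by fun_prop) fun s hs => (hM s hs).det_ne_zero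
  have : NeZero (ν.restrict (Set.Icc 0 1)) :=
    ⟨by simp [Measure.restrict_eq_zero, (prob_compl_eq_zero_iff measurableSet_Icc).1 hν]⟩
  exact Sectorial.integral (hcont.integrableOn_compact isCompact_Icc)
    ((ae_restrict_iff' measurableSet_Icc).2 (ae_of_all _ fun s hs => (hM s hs).inv))

end Sectorial

theorem stmt6_general {n : ℕ} {α : ℝ}
    {A B : Matrix (Fin n) (Fin n) ℂ} (hA : InSector α A) (hB : InSector α B)
    (ν : Measure ℝ) [IsProbabilityMeasure ν] (hν : ν (Set.Icc (0 : ℝ) 1)ᶜ = 0) :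
    InSector α (matMean ν A B) := by
  rw [inSector_iff_sectorial] at hA hB ⊢
  exact hA.matMean hB hν

theorem stmt6 {n : ℕ} (hn : 1 ≤ n) {α : ℝ} (hα0 : 0 ≤ α) (hα : α < Real.pi / 2)
    {A B : Matrix (Fin n) (Fin n) ℂ} (hA : InSector α A) (hB : InSector α B)
    (ν : Measure ℝ) [IsProbabilityMeasure ν] (hν : ν (Set.Icc (0 : ℝ) 1)ᶜ = 0) :
    InSector α (matMean ν A B) :=
  stmt6_general hA hB ν hν
end
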